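/- arXiv:1409.8396 — 9 statements merged into one kernel-verified Lean document; each statement's English description precedes it below -/
import Mathlib

section
/- Let Q be a quandle. Then Q is medial if and only if the displacement group Dis(Q) is an abelian group. -/
/-- The set of left translations of a binary algebra `(Q, op)`, viewed as permutations:
permutations `f` such that `f x = op a x` for some `a`. -/
def translations {Q : Type*} (op : Q → Q → Q) : Set (Equiv.Perm Q) :=
  { f | ∃ a : Q, ∀ x : Q, f x = op a x }

/-- The (left) multiplication group `LMlt(Q)`: the subgroup of the symmetric group
generated by the left translations. -/
def LMlt {Q : Type*} (op : Q → Q → Q) : Subgroup (Equiv.Perm Q) :=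
  Subgroup.closure (translations op)

/-- The displacement group `Dis(Q)`: the subgroup generated by all `L_a * L_b⁻¹`. -/
def Dis {Q : Type*} (op : Q → Q → Q) : Subgroup (Equiv.Perm Q) :=
  Subgroup.closure { f | ∃ g ∈ translations op, ∃ h ∈ translations op, f = g * h⁻¹ }

/-- `(Q, op)` is a quandle: idempotent, left distributive, left quasigroup. -/
def IsQuandle {Q : Type*} (op : Q → Q → Q) : Prop :=
  (∀ x, op x x = x) ∧
  (∀ x y z, op x (op y z) = op (op x y) (op x z)) ∧
  (∀ x y, ∃! u, op x u = y)

/-- `(Q, op)` is medial. -/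
def IsMedial {Q : Type*} (op : Q → Q → Q) : Prop :=
  ∀ x y u v, op (op x y) (op u v) = op (op x u) (op y v)

/-- The orbit of `e` under the multiplication group. -/
def qOrbit {Q : Type*} (op : Q → Q → Q) (e : Q) : Set Q :=
  { y | ∃ f ∈ LMlt op, f e = y }

/-- The orbit of `e` under the displacement group. -/
def disOrbit {Q : Type*} (op : Q → Q → Q) (e : Q) : Set Q :=
  { y | ∃ f ∈ Dis op, f e = y }


/-- Left translation as a permutation. -/
noncomputable def qL {Q : Type*} (op : Q → Q → Q) (hQ : IsQuandle op) (a : Q) :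
    Equiv.Perm Q :=
  Equiv.ofBijective (op a)
    ⟨fun u v h => (hQ.2.2 a (op a u)).unique rfl h.symm,
     fun y => (hQ.2.2 a y).exists⟩

lemma qL_apply {Q : Type*} (op : Q → Q → Q) (hQ : IsQuandle op) (a x : Q) :
    qL op hQ a x = op a x := rfl

lemma qL_mem_translations {Q : Type*} (op : Q → Q → Q) (hQ : IsQuandle op) (a : Q) :
    qL op hQ a ∈ translations op := ⟨a, fun _ => rfl⟩

lemma translations_eq_qL {Q : Type*} {op : Q → Q → Q} (hQ : IsQuandle op)
    {f : Equiv.Perm Q} (hf : f ∈ translations op) : ∃ a, f = qL op hQ a := by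
  obtain ⟨a, ha⟩ := hf
  exact ⟨a, Equiv.ext fun x => ha x⟩

/-- Left distributivity in translation form: `L_{x·y} = L_x L_y L_x⁻¹`. -/
lemma qL_conj {Q : Type*} (op : Q → Q → Q) (hQ : IsQuandle op) (x y : Q) :
    qL op hQ (op x y) = qL op hQ x * qL op hQ y * (qL op hQ x)⁻¹ := by
  have : qL op hQ (op x y) * qL op hQ x = qL op hQ x * qL op hQ y :=
    Equiv.ext fun v => (hQ.2.1 x y v).symm
  calc qL op hQ (op x y)
      = qL op hQ (op x y) * qL op hQ x * (qL op hQ x)⁻¹ := by group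
    _ = qL op hQ x * qL op hQ y * (qL op hQ x)⁻¹ := by rw [this]

lemma closure_comm_aux {G : Type*} [Group G] {S : Set G}
    (hS : ∀ a ∈ S, ∀ b ∈ S, Commute a b) :
    ∀ f ∈ Subgroup.closure S, ∀ g ∈ Subgroup.closure S, f * g = g * f := by
  have h1 : Subgroup.closure S ≤ Subgroup.centralizer S :=
    (Subgroup.closure_le _).2 fun a ha => Subgroup.mem_centralizer_iff.2
      fun b hb => hS b hb a ha
  have h2 : Subgroup.closure S ≤ Subgroup.centralizer (Subgroup.closure S : Set G) :=
    (Subgroup.closure_le _).2 fun a ha => Subgroup.mem_centralizer_iff.2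
      fun b hb => (Subgroup.mem_centralizer_iff.1 (h1 hb) a ha).symm
  intro f hf g hg
  exact (Subgroup.mem_centralizer_iff.1 (h2 hg) f hf)

/-- Proposition 2.1(3): a quandle is medial if and only if its displacement group
is abelian. -/
theorem medial_iff_dis_abelian {Q : Type*} (op : Q → Q → Q) (hQ : IsQuandle op) :
    IsMedial op ↔ ∀ f ∈ Dis op, ∀ g ∈ Dis op, f * g = g * f := by
  set L := qL op hQ with hL
  -- key equivalence: mediality ↔ the identity L_{x·y} * L_u = L_{x·u} * L_y
  have key : IsMedial op ↔ ∀ x y u, L (op x y) * L u = L (op x u) * L y := by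
    constructor
    · intro hM x y u
      exact Equiv.ext fun v => hM x y u v
    · intro h x y u v
      exact congrFun (congrArg (fun (f : Equiv.Perm Q) => (f : Q → Q)) (h x y u)) v
  -- key equivalence 2: that identity ↔ commuting of L_y L_x⁻¹ and L_u L_x⁻¹
  have key2 : ∀ x y u, (L (op x y) * L u = L (op x u) * L y) ↔
      Commute (L y * (L x)⁻¹) (L u * (L x)⁻¹) := by
    intro x y u
    have conj : ∀ a b : Q, L (op a b) = L a * L b * (L a)⁻¹ := qL_conj op hQ
    have comm_conj : ∀ a b c : Equiv.Perm Q,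
        (a * b * a⁻¹ * c = a * c * a⁻¹ * b ↔ b * a⁻¹ * (c * a⁻¹) = c * a⁻¹ * (b * a⁻¹)) := by
      intro a b c
      have e1 : a * b * a⁻¹ * c = a * (b * a⁻¹ * (c * a⁻¹)) * a := by group
      have e2 : a * c * a⁻¹ * b = a * (c * a⁻¹ * (b * a⁻¹)) * a := by group
      rw [e1, e2, mul_right_cancel_iff, mul_left_cancel_iff]
    rw [conj, conj, commute_iff_eq]
    exact comm_conj (L x) (L y) (L u)
  constructor
  · intro hM
    -- all generators commute
    apply closure_comm_aux
    rintro f ⟨g, hg, h, hh, rfl⟩ f' ⟨g', hg', h', hh', rfl⟩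
    obtain ⟨a, rfl⟩ := translations_eq_qL hQ hg
    obtain ⟨b, rfl⟩ := translations_eq_qL hQ hh
    obtain ⟨c, rfl⟩ := translations_eq_qL hQ hg'
    obtain ⟨d, rfl⟩ := translations_eq_qL hQ hh'
    have c1 : Commute (L a * (L d)⁻¹) (L c * (L d)⁻¹) :=
      (key2 d a c).1 ((key.1 hM) d a c)
    have c2 : Commute (L b * (L d)⁻¹) (L c * (L d)⁻¹) :=
      (key2 d b c).1 ((key.1 hM) d b c)
    have c3 : Commute (L d * (L b)⁻¹) (L c * (L d)⁻¹) := by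
      have := c2.inv_left
      simpa using this
    have hdec : L a * (L b)⁻¹ = (L a * (L d)⁻¹) * (L d * (L b)⁻¹) := by group
    show L a * (L b)⁻¹ * (L c * (L d)⁻¹) = L c * (L d)⁻¹ * (L a * (L b)⁻¹)
    rw [hdec]
    exact (c1.mul_left c3)
  · intro hab
    apply key.2
    intro x y u
    apply (key2 x y u).2
    have mem : ∀ p q : Q, L p * (L q)⁻¹ ∈ Dis op := fun p q =>
      Subgroup.subset_closure
        ⟨L p, qL_mem_translations op hQ p, L q, qL_mem_translations op hQ q, rfl⟩
    exact hab _ (mem y x) _ (mem u x)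
end

section
/- Let Q be a medial quandle and e ∈ Q. Then the left translation L_e restricts to a group automorphism of the orbit group Ô(Q,e), and for all a,b in the orbit Qe one has a·b = (a − L_e(a)) + L_e(b), computed in Ô(Q,e). In other words, the orbit Qe, as a subquandle of Q, equals the affine quandle Aff(Ô(Q,e), L_e). -/
/-! Mediality makes the displacement group abelian: it says `L_{xy} L_u = L_{xu} L_y`, i.e.
`L_y L_x⁻¹ L_u = L_u L_x⁻¹ L_y`, so the elements `L_a L_e⁻¹`, which generate `Dis(Q)`, commute.
For an abelian permutation group `G`, orbit–stabilizer identifies the orbit of `e` with the abelian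
group `G ⧸ Stab(e)`, and `α(e) + β(e) = (αβ)(e)`. The automorphism `L_e` fixes `e` and normalises
`Dis(Q)`, so it acts additively on the orbit by `α(e) ↦ (L_e α L_e⁻¹)(e)`. Finally, for
`a = α(e)` and `b = β(e)` we have `L_a = α L_e α⁻¹`, hence
`a · b = (α L_e α⁻¹ β)(e) = (α (L_e α L_e⁻¹)⁻¹ (L_e β L_e⁻¹))(e) = a - L_e a + L_e b`. -/

open MulAction
open scoped IsMulCommutative

theorem Equiv.Perm.conj_apply_of_apply_eq {X : Type*} {φ : Equiv.Perm X} {x : X} (hx : φ x = x)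
    (f : Equiv.Perm X) : (φ * f * φ⁻¹) x = φ (f x) := by
  rw [Equiv.Perm.mul_apply, Equiv.Perm.mul_apply, Equiv.Perm.inv_eq_iff_eq.mpr hx.symm]

namespace Subgroup

variable {X : Type*} (G : Subgroup (Equiv.Perm X)) (x : X)

-- `disOrbit op e` unfolds to `(Dis op).permOrbit e`.
def permOrbit : Set X := {y | ∃ f ∈ G, f x = y}

theorem permOrbit_eq_orbit : G.permOrbit x = orbit G x := by
  ext y
  simp [permOrbit, mem_orbit_iff, smul_def]

variable {G x} in
theorem apply_mem_permOrbit_of_mem_normalizer {φ : Equiv.Perm X} (hφ : φ ∈ normalizer G)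
    (hx : φ x = x) {y : X} (hy : y ∈ G.permOrbit x) : φ y ∈ G.permOrbit x := by
  obtain ⟨f, hf, rfl⟩ := hy
  exact ⟨φ * f * φ⁻¹, (mem_normalizer_iff.mp hφ f).mp hf, Equiv.Perm.conj_apply_of_apply_eq hx f⟩

variable [IsMulCommutative G]

noncomputable def permOrbitEquiv : G.permOrbit x ≃ Additive (G ⧸ stabilizer G x) :=
  ((Equiv.setCongr (G.permOrbit_eq_orbit x)).trans (orbitEquivQuotientStabilizer G x)).trans
    Additive.ofMul

noncomputable instance : AddCommGroup (G.permOrbit x) := (G.permOrbitEquiv x).addCommGroup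

noncomputable def permOrbitMk : Additive G →+ G.permOrbit x :=
  ((G.permOrbitEquiv x).addEquiv.symm : Additive (G ⧸ stabilizer G x) →+ G.permOrbit x).comp
    (QuotientGroup.mk' (stabilizer G x)).toAdditive

theorem coe_zero_permOrbit : ((0 : G.permOrbit x) : X) = x := by
  rw [← map_zero (G.permOrbitMk x)]
  rfl

variable {G x}

theorem eq_permOrbitMk {f : Equiv.Perm X} (hf : f ∈ G) {a : G.permOrbit x} (ha : (a : X) = f x) :
    a = G.permOrbitMk x (.ofMul ⟨f, hf⟩) :=
  Subtype.ext ha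

theorem coe_add_permOrbit {f g : Equiv.Perm X} (hf : f ∈ G) (hg : g ∈ G) {a b : G.permOrbit x}
    (ha : (a : X) = f x) (hb : (b : X) = g x) : ((a + b : G.permOrbit x) : X) = (f * g) x := by
  rw [eq_permOrbitMk hf ha, eq_permOrbitMk hg hb, ← map_add]
  rfl

theorem coe_sub_permOrbit {f g : Equiv.Perm X} (hf : f ∈ G) (hg : g ∈ G) {a b : G.permOrbit x}
    (ha : (a : X) = f x) (hb : (b : X) = g x) : ((a - b : G.permOrbit x) : X) = (f * g⁻¹) x := by
  rw [eq_permOrbitMk hf ha, eq_permOrbitMk hg hb, ← map_sub]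
  rfl

noncomputable def permOrbitConj {φ : Equiv.Perm X} (hφ : φ ∈ normalizer G) (hx : φ x = x) :
    G.permOrbit x ≃+ G.permOrbit x where
  toFun a := ⟨φ a, apply_mem_permOrbit_of_mem_normalizer hφ hx a.2⟩
  invFun a := ⟨φ⁻¹ a, apply_mem_permOrbit_of_mem_normalizer (inv_mem hφ)
    (by rw [Equiv.Perm.inv_eq_iff_eq, hx]) a.2⟩
  left_inv a := by simp
  right_inv a := by simp
  map_add' := by
    rintro ⟨_, f, hf, rfl⟩ ⟨_, g, hg, rfl⟩
    have hconj {h : Equiv.Perm X} (hh : h ∈ G) : φ * h * φ⁻¹ ∈ G :=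
      (mem_normalizer_iff.mp hφ h).mp hh
    apply Subtype.ext
    change φ ((_ + _ : G.permOrbit x) : X) = _
    rw [coe_add_permOrbit hf hg rfl rfl, coe_add_permOrbit (hconj hf) (hconj hg)
      (Equiv.Perm.conj_apply_of_apply_eq hx f).symm (Equiv.Perm.conj_apply_of_apply_eq hx g).symm,
      show φ * f * φ⁻¹ * (φ * g * φ⁻¹) = φ * (f * g) * φ⁻¹ by group,
      Equiv.Perm.conj_apply_of_apply_eq hx]

end Subgroup

section Translations

variable {Q : Type*} {op : Q → Q → Q}

variable (op) in
def autGroup : Subgroup (Equiv.Perm Q) where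
  carrier := {f | ∀ x y, f (op x y) = op (f x) (f y)}
  mul_mem' {f g} hf hg x y := by simp only [Equiv.Perm.mul_apply, hg x y, hf (g x) (g y)]
  one_mem' _ _ := rfl
  inv_mem' {f} hf x y := f.injective <| by rw [hf]; simp

theorem mem_autGroup_of_mem_translations (hdist : ∀ x y z, op x (op y z) = op (op x y) (op x z))
    {g : Equiv.Perm Q} (hg : g ∈ translations op) : g ∈ autGroup op := by
  obtain ⟨a, ha⟩ := hg
  intro x y
  rw [ha, ha, ha, hdist]

theorem dis_le_autGroup (hdist : ∀ x y z, op x (op y z) = op (op x y) (op x z)) :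
    Dis op ≤ autGroup op := by
  refine (Subgroup.closure_le _).mpr ?_
  rintro _ ⟨g, hg, h, hh, rfl⟩
  exact mul_mem (mem_autGroup_of_mem_translations hdist hg)
    (inv_mem (mem_autGroup_of_mem_translations hdist hh))

theorem conj_mem_translations {f g : Equiv.Perm Q} (hf : f ∈ autGroup op)
    (hg : g ∈ translations op) : f * g * f⁻¹ ∈ translations op := by
  obtain ⟨a, ha⟩ := hg
  refine ⟨f a, fun y => ?_⟩
  rw [Equiv.Perm.mul_apply, Equiv.Perm.mul_apply, ha, hf]
  simp

theorem conj_mem_dis {f d : Equiv.Perm Q} (hf : f ∈ autGroup op) (hd : d ∈ Dis op) :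
    f * d * f⁻¹ ∈ Dis op := by
  refine (Subgroup.closure_le ((Dis op).comap (MulAut.conj f).toMonoidHom)).mpr ?_ hd
  rintro _ ⟨g, hg, h, hh, rfl⟩
  exact Subgroup.subset_closure
    ⟨_, conj_mem_translations hf hg, _, conj_mem_translations hf hh, by simp [mul_assoc]⟩

theorem autGroup_le_normalizer_dis : autGroup op ≤ Subgroup.normalizer (Dis op) := by
  intro f hf
  refine Subgroup.mem_normalizer_iff.mpr fun d => ⟨conj_mem_dis hf, fun hd => ?_⟩
  simpa [mul_assoc] using conj_mem_dis (inv_mem hf) hd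

end Translations

namespace IsQuandle

variable {Q : Type*} {op : Q → Q → Q} (hQ : IsQuandle op)

noncomputable def leftTransl (a : Q) : Equiv.Perm Q :=
  Equiv.ofBijective (op a)
    ⟨fun _ y h => (hQ.2.2 a (op a y)).unique h rfl, fun y => (hQ.2.2 a y).exists⟩

@[simp] theorem leftTransl_apply (a x : Q) : hQ.leftTransl a x = op a x := rfl

theorem leftTransl_mem_translations (a : Q) : hQ.leftTransl a ∈ translations op :=
  ⟨a, fun _ => rfl⟩

theorem exists_eq_leftTransl {f : Equiv.Perm Q} (hf : f ∈ translations op) :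
    ∃ a, f = hQ.leftTransl a :=
  let ⟨a, ha⟩ := hf
  ⟨a, Equiv.ext ha⟩

theorem leftTransl_mem_autGroup (a : Q) : hQ.leftTransl a ∈ autGroup op :=
  mem_autGroup_of_mem_translations hQ.2.1 (hQ.leftTransl_mem_translations a)

theorem leftTransl_apply_of_mem_autGroup {f : Equiv.Perm Q} (hf : f ∈ autGroup op) (a : Q) :
    hQ.leftTransl (f a) = f * hQ.leftTransl a * f⁻¹ := by
  ext x
  simp [hf a]

theorem leftTransl_op (a b : Q) :
    hQ.leftTransl (op a b) = hQ.leftTransl a * hQ.leftTransl b * (hQ.leftTransl a)⁻¹ :=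
  hQ.leftTransl_apply_of_mem_autGroup (hQ.leftTransl_mem_autGroup a) b

theorem leftTransl_mem_normalizer_dis (e : Q) :
    hQ.leftTransl e ∈ Subgroup.normalizer (Dis op) :=
  autGroup_le_normalizer_dis (hQ.leftTransl_mem_autGroup e)

noncomputable def orbitLeftTransl (e : Q) [IsMulCommutative (Dis op)] :
    (Dis op).permOrbit e ≃+ (Dis op).permOrbit e :=
  Subgroup.permOrbitConj (hQ.leftTransl_mem_normalizer_dis e) (hQ.1 e)

@[simp] theorem coe_orbitLeftTransl (e : Q) [IsMulCommutative (Dis op)]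
    (a : (Dis op).permOrbit e) : (hQ.orbitLeftTransl e a : Q) = op e a := rfl

theorem op_eq_sub_add (e : Q) [IsMulCommutative (Dis op)] (a b : (Dis op).permOrbit e) :
    op a b =
      ((a - hQ.orbitLeftTransl e a + hQ.orbitLeftTransl e b : (Dis op).permOrbit e) : Q) := by
  obtain ⟨_, α, hα, rfl⟩ := a
  obtain ⟨_, β, hβ, rfl⟩ := b
  set L := hQ.leftTransl e
  have hL : L e = e := hQ.1 e
  have hconj {f : Equiv.Perm Q} (hf : f ∈ Dis op) : L * f * L⁻¹ ∈ Dis op :=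
    conj_mem_dis (hQ.leftTransl_mem_autGroup e) hf
  rw [Subgroup.coe_add_permOrbit (mul_mem hα (inv_mem (hconj hα))) (hconj hβ)
    (Subgroup.coe_sub_permOrbit hα (hconj hα) rfl (Equiv.Perm.conj_apply_of_apply_eq hL α).symm)
    (Equiv.Perm.conj_apply_of_apply_eq hL β).symm]
  rw [← hQ.leftTransl_apply, hQ.leftTransl_apply_of_mem_autGroup (dis_le_autGroup hQ.2.1 hα),
    show α * (L * α * L⁻¹)⁻¹ * (L * β * L⁻¹) = α * L * α⁻¹ * β * L⁻¹ by group,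
    Equiv.Perm.mul_apply _ L⁻¹, Equiv.Perm.inv_eq_iff_eq.mpr hL.symm]
  rfl

end IsQuandle

namespace IsMedial

variable {Q : Type*} {op : Q → Q → Q}

theorem leftTransl_mul_inv_mul_comm (hQ : IsQuandle op) (hM : IsMedial op) (x y u : Q) :
    hQ.leftTransl y * (hQ.leftTransl x)⁻¹ * hQ.leftTransl u =
      hQ.leftTransl u * (hQ.leftTransl x)⁻¹ * hQ.leftTransl y := by
  have h : hQ.leftTransl (op x y) * hQ.leftTransl u = hQ.leftTransl (op x u) * hQ.leftTransl y :=
    Equiv.ext (hM x y u)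
  rw [hQ.leftTransl_op, hQ.leftTransl_op] at h
  simpa [mul_assoc] using congrArg ((hQ.leftTransl x)⁻¹ * ·) h

theorem isMulCommutative_dis (hQ : IsQuandle op) (hM : IsMedial op) :
    IsMulCommutative (Dis op) := by
  refine Subgroup.isMulCommutative_closure ?_
  rintro _ ⟨_, hg, _, hh, rfl⟩ _ ⟨_, hg', _, hh', rfl⟩
  obtain ⟨a, rfl⟩ := hQ.exists_eq_leftTransl hg
  obtain ⟨b, rfl⟩ := hQ.exists_eq_leftTransl hh
  obtain ⟨c, rfl⟩ := hQ.exists_eq_leftTransl hg'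
  obtain ⟨d, rfl⟩ := hQ.exists_eq_leftTransl hh'
  have hcomm (u v : Q) :
      Commute (hQ.leftTransl u * (hQ.leftTransl b)⁻¹) (hQ.leftTransl v * (hQ.leftTransl b)⁻¹) := by
    simp only [Commute, SemiconjBy, ← mul_assoc, hM.leftTransl_mul_inv_mul_comm hQ b u v]
  rw [show hQ.leftTransl c * (hQ.leftTransl d)⁻¹ =
      hQ.leftTransl c * (hQ.leftTransl b)⁻¹ * (hQ.leftTransl d * (hQ.leftTransl b)⁻¹)⁻¹ by group]
  exact ((hcomm a c).mul_right (hcomm a d).inv_right).eq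

end IsMedial

/-- Proposition 3.3: for a medial quandle `Q` and `e ∈ Q`, the orbit `Qe` carries an
abelian group structure (the orbit group, with zero `e` and `α(e) + β(e) = (αβ)(e)`),
the left translation `L_e` restricts to a group automorphism of it, and the quandle
operation on the orbit is affine: `a · b = (a - L_e a) + L_e b`.
That is, `Qe = Aff(Ô(Q,e), L_e)`. -/
theorem orbit_is_affine {Q : Type*} (op : Q → Q → Q) (hQ : IsQuandle op)
    (hM : IsMedial op) (e : Q) :
    ∃ _inst : AddCommGroup {y : Q // y ∈ disOrbit op e},
      (((0 : {y : Q // y ∈ disOrbit op e}) : Q) = e) ∧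
      (∀ (α β : Equiv.Perm Q) (hα : α ∈ Dis op) (hβ : β ∈ Dis op),
        (⟨α e, ⟨α, hα, rfl⟩⟩ : {y : Q // y ∈ disOrbit op e}) +
          (⟨β e, ⟨β, hβ, rfl⟩⟩ : {y : Q // y ∈ disOrbit op e}) =
          (⟨(α * β) e, ⟨α * β, mul_mem hα hβ, rfl⟩⟩ : {y : Q // y ∈ disOrbit op e})) ∧
      ∃ Le : {y : Q // y ∈ disOrbit op e} ≃+ {y : Q // y ∈ disOrbit op e},
        (∀ a : {y : Q // y ∈ disOrbit op e}, ((Le a : Q)) = op e (a : Q)) ∧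
        (∀ a b : {y : Q // y ∈ disOrbit op e},
          op (a : Q) (b : Q) = ((a - Le a + Le b : {y : Q // y ∈ disOrbit op e}) : Q)) := by
  have := hM.isMulCommutative_dis hQ
  exact ⟨(inferInstance : AddCommGroup ((Dis op).permOrbit e)),
    Subgroup.coe_zero_permOrbit _ _,
    fun α β hα hβ => Subtype.ext (Subgroup.coe_add_permOrbit hα hβ rfl rfl),
    hQ.orbitLeftTransl e, hQ.coe_orbitLeftTransl e, hQ.op_eq_sub_add e⟩
end

section
/- A connected quandle is medial if and only if it is isomorphic (as a binary algebra) to an affine quandle Aff(A,f) for some abelian group A and automorphism f of A. -/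
/-
For a quandle, conjugating a left translation by `h ∈ LMlt` gives `h L_a h⁻¹ = L_{h a}`. Hence
the displacement group `Dis = ⟨L_a L_b⁻¹⟩` is normalised by `LMlt`, and `LMlt = Dis · ⟨L_e⟩`
where `L_e` fixes `e`, so `Dis` has the same orbits as `LMlt`. Mediality makes the generators
`L_a L_e⁻¹` of `Dis` commute, so for a connected medial quandle `Dis` is an abelian group acting
transitively, hence regularly, on `Q`. Identifying `Q` with `Dis` through `d ↦ d e`, the identity
`L_{d e} = d L_e d⁻¹` turns the operation into `x·y = x - f x + f y`, where `f` is conjugation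
by `L_e`. Conversely, every affine quandle is medial by a direct computation.
-/

universe u

theorem Dis_le_LMlt {Q : Type*} {op : Q → Q → Q} : Dis op ≤ LMlt op :=
  Subgroup.closure_le _ |>.2 fun _ ⟨_, hg, _, hh, hf⟩ =>
    hf ▸ mul_mem (Subgroup.subset_closure hg) (inv_mem (Subgroup.subset_closure hh))

namespace IsQuandle

variable {Q : Type*} {op : Q → Q → Q} (hQ : IsQuandle op)

theorem bijective_op (hQ : IsQuandle op) (a : Q) : Function.Bijective (op a) :=
  ⟨fun u _ huv => (hQ.2.2 a (op a u)).unique rfl huv.symm,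
    fun y => (hQ.2.2 a y).exists⟩

noncomputable def leftMul (a : Q) : Equiv.Perm Q :=
  Equiv.ofBijective (op a) (hQ.bijective_op a)

@[simp]
theorem leftMul_apply (a x : Q) : hQ.leftMul a x = op a x := rfl

theorem translations_eq_range : translations op = Set.range hQ.leftMul := by
  ext f
  exact ⟨fun ⟨a, ha⟩ => ⟨a, Equiv.ext fun x => (ha x).symm⟩, fun ⟨a, ha⟩ => ⟨a, by simp [← ha]⟩⟩

theorem leftMul_mem_translations (a : Q) : hQ.leftMul a ∈ translations op :=
  ⟨a, fun _ => rfl⟩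

theorem leftMul_mem_LMlt (a : Q) : hQ.leftMul a ∈ LMlt op :=
  Subgroup.subset_closure (hQ.leftMul_mem_translations a)

theorem leftMul_mul_inv_mem_Dis (a b : Q) : hQ.leftMul a * (hQ.leftMul b)⁻¹ ∈ Dis op :=
  Subgroup.subset_closure
    ⟨_, hQ.leftMul_mem_translations a, _, hQ.leftMul_mem_translations b, rfl⟩

theorem leftMul_apply_self (a : Q) : hQ.leftMul a a = a := hQ.1 a

theorem leftMul_inv_apply_self (a : Q) : (hQ.leftMul a)⁻¹ a = a :=
  Equiv.Perm.inv_eq_iff_eq.2 (hQ.leftMul_apply_self a).symm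

theorem leftMul_op (a b : Q) :
    hQ.leftMul (op a b) = hQ.leftMul a * hQ.leftMul b * (hQ.leftMul a)⁻¹ := by
  rw [eq_mul_inv_iff_mul_eq]
  ext x
  exact (hQ.2.1 a b x).symm

theorem conj_leftMul {h : Equiv.Perm Q} (hh : h ∈ LMlt op) (a : Q) :
    h * hQ.leftMul a * h⁻¹ = hQ.leftMul (h a) := by
  induction hh using Subgroup.closure_induction generalizing a with
  | mem f hf =>
    obtain ⟨b, rfl⟩ := hQ.translations_eq_range ▸ hf
    exact (hQ.leftMul_op b a).symm
  | one => simp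
  | mul f g _ _ ihf ihg =>
    rw [show f * g * hQ.leftMul a * (f * g)⁻¹ = f * (g * hQ.leftMul a * g⁻¹) * f⁻¹ by group,
      ihg, ihf]
    rfl
  | inv f _ ihf =>
    have := ihf (f⁻¹ a)
    rw [← Equiv.Perm.mul_apply, mul_inv_cancel, Equiv.Perm.one_apply] at this
    rw [← this]
    group

theorem Dis_eq_closure_range :
    Dis op = Subgroup.closure
      (Set.range fun p : Q × Q => hQ.leftMul p.1 * (hQ.leftMul p.2)⁻¹) := by
  rw [Dis, hQ.translations_eq_range]
  congr 1
  ext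
  simp [eq_comm]

theorem Dis_eq_closure_leftMul_mul_inv (e : Q) :
    Dis op = Subgroup.closure (Set.range fun a => hQ.leftMul a * (hQ.leftMul e)⁻¹) := by
  refine le_antisymm ?_ (Subgroup.closure_le _ |>.2 fun _ ⟨a, ha⟩ =>
    ha ▸ hQ.leftMul_mul_inv_mem_Dis a e)
  rw [hQ.Dis_eq_closure_range, Subgroup.closure_le]
  rintro _ ⟨⟨a, b⟩, rfl⟩
  dsimp only
  rw [show hQ.leftMul a * (hQ.leftMul b)⁻¹ =
      hQ.leftMul a * (hQ.leftMul e)⁻¹ * (hQ.leftMul b * (hQ.leftMul e)⁻¹)⁻¹ by group]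
  exact mul_mem (Subgroup.subset_closure ⟨a, rfl⟩) (inv_mem (Subgroup.subset_closure ⟨b, rfl⟩))

theorem LMlt_le_normalizer_Dis (hQ : IsQuandle op) :
    LMlt op ≤ Subgroup.normalizer (Dis op : Set (Equiv.Perm Q)) := by
  rw [hQ.Dis_eq_closure_range, Subgroup.le_normalizer_closure_iff]
  rintro h hh _ ⟨⟨a, b⟩, rfl⟩
  rw [show h * (hQ.leftMul a * (hQ.leftMul b)⁻¹) * h⁻¹ =
    (h * hQ.leftMul a * h⁻¹) * (h * hQ.leftMul b * h⁻¹)⁻¹ by group,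
    hQ.conj_leftMul hh, hQ.conj_leftMul hh]
  exact Subgroup.subset_closure ⟨(h a, h b), rfl⟩

open scoped Pointwise in
theorem exists_mem_Dis_apply_eq (hQ : IsQuandle op) (e : Q) {h : Equiv.Perm Q}
    (hh : h ∈ LMlt op) : ∃ d ∈ Dis op, d e = h e := by
  have hLMlt : LMlt op ≤ Dis op ⊔ Subgroup.zpowers (hQ.leftMul e) := by
    rw [LMlt, hQ.translations_eq_range, Subgroup.closure_le]
    rintro _ ⟨a, rfl⟩
    rw [← inv_mul_cancel_right (hQ.leftMul a) (hQ.leftMul e)]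
    exact mul_mem (Subgroup.mem_sup_left (hQ.leftMul_mul_inv_mem_Dis a e))
      (Subgroup.mem_sup_right (Subgroup.mem_zpowers _))
  have hprod : ((Dis op ⊔ Subgroup.zpowers (hQ.leftMul e) : Subgroup _) : Set (Equiv.Perm Q)) =
      (Dis op : Set (Equiv.Perm Q)) * (Subgroup.zpowers (hQ.leftMul e) : Set (Equiv.Perm Q)) :=
    Subgroup.coe_mul_of_right_le_normalizer_left _ _
      ((Subgroup.zpowers_le).2 (hQ.LMlt_le_normalizer_Dis (hQ.leftMul_mem_LMlt e)))
  obtain ⟨d, hd, _, ⟨n, rfl⟩, rfl⟩ := Set.mem_mul.1 (hprod ▸ SetLike.mem_coe.2 (hLMlt hh))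
  exact ⟨d, hd, by
    simp [Equiv.Perm.zpow_apply_eq_self_of_apply_eq_self (hQ.leftMul_apply_self e)]⟩

theorem op_apply_apply (hQ : IsQuandle op) {d : Equiv.Perm Q} (hd : d ∈ LMlt op)
    (d' : Equiv.Perm Q) (e : Q) :
    op (d e) (d' e) = (d * (hQ.leftMul e * d * (hQ.leftMul e)⁻¹)⁻¹ *
      (hQ.leftMul e * d' * (hQ.leftMul e)⁻¹)) e := by
  rw [show d * (hQ.leftMul e * d * (hQ.leftMul e)⁻¹)⁻¹ * (hQ.leftMul e * d' * (hQ.leftMul e)⁻¹) =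
    d * hQ.leftMul e * d⁻¹ * d' * (hQ.leftMul e)⁻¹ by group, hQ.conj_leftMul hd]
  simp only [Equiv.Perm.mul_apply, hQ.leftMul_inv_apply_self, hQ.leftMul_apply]

end IsQuandle

theorem Equiv.Perm.eq_of_apply_eq_of_commute {α : Type*} {S : Set (Equiv.Perm α)} {e : α}
    (hS : ∀ y, ∃ d ∈ S, d e = y) {σ τ : Equiv.Perm α} (hσ : ∀ d ∈ S, Commute σ d)
    (hτ : ∀ d ∈ S, Commute τ d) (h : σ e = τ e) : σ = τ := by
  ext y
  obtain ⟨d, hd, rfl⟩ := hS y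
  calc σ (d e) = d (σ e) := congrArg (· e) (hσ d hd).eq
    _ = d (τ e) := by rw [h]
    _ = τ (d e) := congrArg (· e) (hτ d hd).eq.symm

namespace IsMedial

variable {Q : Type*} {op : Q → Q → Q}

theorem leftMul_op_mul_leftMul (hM : IsMedial op) (hQ : IsQuandle op) (x y u : Q) :
    hQ.leftMul (op x y) * hQ.leftMul u = hQ.leftMul (op x u) * hQ.leftMul y :=
  Equiv.ext fun v => hM x y u v

theorem commute_leftMul_mul_inv (hM : IsMedial op) (hQ : IsQuandle op) (e a b : Q) :
    Commute (hQ.leftMul a * (hQ.leftMul e)⁻¹) (hQ.leftMul b * (hQ.leftMul e)⁻¹) := by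
  have h := hM.leftMul_op_mul_leftMul hQ e a b
  rw [hQ.leftMul_op, hQ.leftMul_op] at h
  have := congrArg (fun g => (hQ.leftMul e)⁻¹ * g * (hQ.leftMul e)⁻¹) h
  simp only [mul_assoc, inv_mul_cancel_left] at this
  simpa only [Commute, SemiconjBy, mul_assoc] using this

theorem isMulCommutative_Dis [Nonempty Q] (hM : IsMedial op) (hQ : IsQuandle op) :
    IsMulCommutative (Dis op) := by
  obtain ⟨e⟩ := ‹Nonempty Q›
  rw [hQ.Dis_eq_closure_leftMul_mul_inv e]
  exact Subgroup.isMulCommutative_closure <| by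
    rintro _ ⟨a, rfl⟩ _ ⟨b, rfl⟩
    exact hM.commute_leftMul_mul_inv hQ e a b

end IsMedial

theorem IsQuandle.bijective_Dis_apply {Q : Type*} {op : Q → Q → Q} (hQ : IsQuandle op)
    [IsMulCommutative (Dis op)] (hconn : ∀ x y : Q, ∃ f ∈ LMlt op, f x = y) (e : Q) :
    Function.Bijective fun d : Dis op => (d : Equiv.Perm Q) e := by
  have htrans : ∀ y, ∃ d ∈ Dis op, d e = y := fun y => by
    obtain ⟨f, hf, rfl⟩ := hconn e y
    exact hQ.exists_mem_Dis_apply_eq e hf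
  refine ⟨fun d₁ d₂ h => Subtype.ext ?_, fun y => ?_⟩
  · exact Equiv.Perm.eq_of_apply_eq_of_commute htrans
      (fun d hd => setLike_mul_comm d₁.2 hd)
      (fun d hd => setLike_mul_comm d₂.2 hd) h
  · obtain ⟨d, hd, rfl⟩ := htrans y
    exact ⟨⟨d, hd⟩, rfl⟩

open scoped IsMulCommutative in
theorem exists_affine_of_equiv {Q : Type*} {op : Q → Q → Q} {G : Type u} [Group G]
    [IsMulCommutative G] (f : G ≃* G) (ψ : G ≃ Q)
    (hψ : ∀ a b, op (ψ a) (ψ b) = ψ (a * (f a)⁻¹ * f b)) :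
    ∃ (A : Type u) (_ : AddCommGroup A) (f : A ≃+ A) (φ : Q ≃ A),
      ∀ x y : Q, φ (op x y) = (φ x - f (φ x)) + f (φ y) := by
  refine ⟨Additive G, inferInstance, MulEquiv.toAdditive f, ψ.symm.trans Additive.ofMul, ?_⟩
  intro x y
  obtain ⟨a, rfl⟩ := ψ.surjective x
  obtain ⟨b, rfl⟩ := ψ.surjective y
  simp [hψ, sub_eq_add_neg]

theorem isMedial_of_affine {Q A : Type*} {op : Q → Q → Q} [AddCommGroup A] (f : A ≃+ A)
    (φ : Q ≃ A) (hφ : ∀ x y : Q, φ (op x y) = (φ x - f (φ x)) + f (φ y)) : IsMedial op := by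
  intro x y u v
  apply φ.injective
  simp only [hφ, map_add, map_sub]
  abel

/-- Corollary 3.4: a connected quandle is medial if and only if it is isomorphic
(as a binary algebra) to an affine quandle `Aff(A, f)`. -/
theorem connected_medial_iff_affine {Q : Type u} [Nonempty Q] (op : Q → Q → Q)
    (hQ : IsQuandle op)
    (hconn : ∀ x y : Q, ∃ f ∈ LMlt op, f x = y) :
    IsMedial op ↔
      ∃ (A : Type u) (_ : AddCommGroup A) (f : A ≃+ A) (φ : Q ≃ A),
        ∀ x y : Q, φ (op x y) = (φ x - f (φ x)) + f (φ y) := by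
  refine ⟨fun hM => ?_, fun ⟨_, _, f, φ, hφ⟩ => isMedial_of_affine f φ hφ⟩
  obtain ⟨e⟩ := ‹Nonempty Q›
  have := hM.isMulCommutative_Dis hQ
  let σ : Subgroup.normalizer (Dis op : Set (Equiv.Perm Q)) :=
    ⟨hQ.leftMul e, hQ.LMlt_le_normalizer_Dis (hQ.leftMul_mem_LMlt e)⟩
  refine exists_affine_of_equiv ((Dis op).normalizerMonoidHom σ)
    (Equiv.ofBijective _ (hQ.bijective_Dis_apply hconn e)) fun a b => ?_
  simpa only [Equiv.ofBijective_apply, Subgroup.coe_mul, InvMemClass.coe_inv,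
    Subgroup.normalizerMonoidHom_apply_apply_coe] using
    hQ.op_apply_apply (Dis_le_LMlt a.2) b e
end

section
/- The sum of an affine mesh is a medial quandle: it is idempotent, left distributive, a left quasigroup, and satisfies (x*y)*(u*v) = (x*u)*(y*v) for all elements x,y,u,v. -/
/-- An affine mesh over an index set `I`: abelian groups `A i`, homomorphisms
`φ i j : A i →+ A j`, and constants `c i j ∈ A j`, satisfying (M1)–(M4). -/
structure AffineMesh (I : Type*) (A : I → Type*) [∀ i, AddCommGroup (A i)] where
  φ : ∀ i j : I, A i →+ A j
  c : ∀ i j : I, A j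
  m1 : ∀ i : I, Function.Bijective fun x : A i => x - φ i i x
  m2 : ∀ i : I, c i i = 0
  m3 : ∀ i j j' k : I, (φ j k).comp (φ i j) = (φ j' k).comp (φ i j')
  m4 : ∀ i j k : I, φ j k (c i j) = φ k k (c i k - c j k)

/-- The sum of an affine mesh: the binary operation on the disjoint union of the fibres,
`a * b = c i j + φ i j a + (1 - φ j j) b` for `a ∈ A i`, `b ∈ A j`. -/
def AffineMesh.sum {I : Type*} {A : I → Type*} [∀ i, AddCommGroup (A i)]
    (M : AffineMesh I A) (x y : Σ i, A i) : Σ i, A i :=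
  ⟨y.1, M.c x.1 y.1 + M.φ x.1 y.1 x.2 + (y.2 - M.φ y.1 y.1 y.2)⟩

/-- An affine mesh is indecomposable if every fibre `A j` is generated by the
sets `c i j + Im (φ i j)`, `i ∈ I`. -/
def AffineMesh.Indecomposable {I : Type*} {A : I → Type*} [∀ i, AddCommGroup (A i)]
    (M : AffineMesh I A) : Prop :=
  ∀ j : I, AddSubgroup.closure (⋃ i : I, Set.range fun a : A i => M.c i j + M.φ i j a) = ⊤

/-! Idempotence is (M2). Mediality is a direct computation: (M3) and (M4) rewrite every composite
of the `φ`'s and every transported constant through `φ l l`, after which both sides agree.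
Left distributivity follows from idempotence and mediality, and a left translation is a
bijection because it preserves fibres and acts on each fibre `A j` as a translate of the
automorphism `1 - φ j j` of (M1). -/

theorem IsMedial.leftDistrib_of_idem {Q : Type*} {op : Q → Q → Q} (hmed : IsMedial op)
    (hidem : ∀ x, op x x = x) (x y z : Q) : op x (op y z) = op (op x y) (op x z) := by
  conv_lhs => rw [← hidem x]
  exact hmed x x y z

namespace AffineMesh

variable {I : Type*} {A : I → Type*} [∀ i, AddCommGroup (A i)] (M : AffineMesh I A)

@[simp]
lemma sum_mk (i j : I) (a : A i) (b : A j) :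
    M.sum ⟨i, a⟩ ⟨j, b⟩ = ⟨j, M.c i j + M.φ i j a + (b - M.φ j j b)⟩ :=
  rfl

lemma φ_φ_apply (i j k : I) (a : A i) : M.φ j k (M.φ i j a) = M.φ k k (M.φ i k a) :=
  DFunLike.congr_fun (M.m3 i j k k) a

lemma φ_c (i j k : I) : M.φ j k (M.c i j) = M.φ k k (M.c i k) - M.φ k k (M.c j k) := by
  rw [M.m4 i j k, map_sub]

lemma sum_self (x : Σ i, A i) : M.sum x x = x := by
  obtain ⟨i, a⟩ := x
  simp [M.m2]

lemma isMedial_sum : IsMedial M.sum := by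
  rintro ⟨i, a⟩ ⟨j, b⟩ ⟨k, u⟩ ⟨l, v⟩
  simp only [sum_mk, map_add, map_sub, Sigma.mk.injEq, heq_eq_eq, true_and]
  rw [M.φ_c i j l, M.φ_c i k l, M.φ_c k l l, M.φ_c j l l, M.φ_φ_apply i j l, M.φ_φ_apply k l l,
    M.φ_φ_apply i k l, M.φ_φ_apply j l l, M.φ_φ_apply j j l, M.φ_φ_apply k k l]
  simp only [M.m2, map_zero]
  abel

lemma sum_eq_sigmaMap (x : Σ i, A i) :
    M.sum x = Sigma.map id fun j b => M.c x.1 j + M.φ x.1 j x.2 + (b - M.φ j j b) :=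
  rfl

lemma bijective_sum_left (x : Σ i, A i) : Function.Bijective (M.sum x) := by
  rw [sum_eq_sigmaMap]
  exact ⟨Function.injective_id.sigma_map fun j => (add_right_injective _).comp (M.m1 j).1,
    Function.surjective_id.sigma_map fun j => (add_left_surjective _).comp (M.m1 j).2⟩

end AffineMesh

theorem mesh_sum_is_medial_quandle_general {I : Type*} {A : I → Type*}
    [∀ i, AddCommGroup (A i)] (M : AffineMesh I A) :
    IsQuandle M.sum ∧ IsMedial M.sum :=
  ⟨⟨M.sum_self, M.isMedial_sum.leftDistrib_of_idem M.sum_self,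
    fun x => (M.bijective_sum_left x).existsUnique⟩, M.isMedial_sum⟩

/-- Lemma 3.6: the sum of an affine mesh is a medial quandle. -/
theorem mesh_sum_is_medial_quandle {I : Type*} [Nonempty I] {A : I → Type*}
    [∀ i, AddCommGroup (A i)] (M : AffineMesh I A) :
    IsQuandle M.sum ∧ IsMedial M.sum :=
  mesh_sum_is_medial_quandle_general M
end

section
/- Let ((A_i)_{i∈I}; φ_{i,j}; c_{i,j}) be an affine mesh over a set I with all fibres A_i finite. Then for every i ∈ I, the cardinality of the image of φ_{i,i}² divides the greatest common divisor of the cardinalities |A_j|, j ∈ I. -/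
/-- Proposition 3.16: in an affine mesh with finite fibres, `|Im (φ i i)²|` is a common
divisor of the cardinalities of all fibres, i.e. it divides their greatest common
divisor. -/
theorem mesh_image_sq_dvd_gcd {I : Type*} [Nonempty I] {A : I → Type*}
    [∀ i, AddCommGroup (A i)] [∀ i, Finite (A i)] (M : AffineMesh I A) (i : I) :
    ∀ j : I, Nat.card (Set.range fun x : A i => M.φ i i (M.φ i i x)) ∣ Nat.card (A j) := by
  intro j
  have hpt : ∀ x : A i, M.φ i i (M.φ i i x) = M.φ j i (M.φ i j x) := fun x =>
    (DFunLike.congr_fun (M.m3 i j i i) x).symm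
  let f : (M.φ i j).range →+ A i := (M.φ j i).comp (M.φ i j).range.subtype
  have hset : (Set.range fun x : A i => M.φ i i (M.φ i i x)) = Set.range f := by
    ext y
    constructor
    · rintro ⟨x, rfl⟩
      exact ⟨⟨M.φ i j x, ⟨x, rfl⟩⟩, (hpt x).symm⟩
    · rintro ⟨⟨z, x, rfl⟩, rfl⟩
      exact ⟨x, hpt x⟩
  rw [hset]
  calc Nat.card (Set.range f) = Nat.card f.range := rfl
    _ ∣ Nat.card (M.φ i j).range :=
        AddSubgroup.card_dvd_of_surjective f.rangeRestrict f.rangeRestrict_surjective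
    _ ∣ Nat.card (A j) := AddSubgroup.card_addSubgroup_dvd_card _
end

section
/- Let A = ((A_i)_{i∈I}; φ_{i,j}; c_{i,j}) and A' = ((A'_i)_{i∈I}; φ'_{i,j}; c'_{i,j}) be two indecomposable affine meshes over the same index set I. Then the sums of A and A' are isomorphic as binary algebras if and only if the meshes A and A' are homologous. -/
/-- Two affine meshes over the same index set are homologous: there are a permutation
`π` of `I`, isomorphisms `ψ i : A i ≃+ A' (π i)` and constants `d i ∈ A' (π i)`
satisfying (H1) and (H2). -/
def Homologous {I : Type*} {A A' : I → Type*} [∀ i, AddCommGroup (A i)]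
    [∀ i, AddCommGroup (A' i)] (M : AffineMesh I A) (M' : AffineMesh I A') : Prop :=
  ∃ (π : Equiv.Perm I) (ψ : ∀ i, A i ≃+ A' (π i)) (d : ∀ i, A' (π i)),
    (∀ (i j : I) (x : A i), ψ j (M.φ i j x) = M'.φ (π i) (π j) (ψ i x)) ∧
    (∀ i j : I, ψ j (M.c i j) =
      M'.c (π i) (π j) + M'.φ (π i) (π j) (d i) - M'.φ (π j) (π j) (d j))

private lemma sigma_eq_snd {I : Type*} {β : I → Type*} (x : Σ i, β i) (k : I) (h : x.1 = k) :
    ∃ y : β k, x = ⟨k, y⟩ := by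
  obtain ⟨a, b⟩ := x
  have h' : a = k := h
  subst h'
  exact ⟨b, rfl⟩

/-- The first component of the image of a sum-morphism is constant on fibres. -/
private lemma fiber_const {I : Type*} {A A' : I → Type*} [∀ i, AddCommGroup (A i)]
    [∀ i, AddCommGroup (A' i)] (M : AffineMesh I A) (M' : AffineMesh I A')
    (hind : M.Indecomposable)
    (Φ : (Σ i, A i) → (Σ i, A' i))
    (hΦ : ∀ x y, Φ (M.sum x y) = M'.sum (Φ x) (Φ y))
    (j : I) (b : A j) : (Φ ⟨j, b⟩).1 = (Φ ⟨j, 0⟩).1 := by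
  have key : ∀ (i : I) (a : A i) (b : A j),
      (Φ ⟨j, M.c i j + M.φ i j a + (b - M.φ j j b)⟩).1 = (Φ ⟨j, b⟩).1 := by
    intro i a b
    have h := congrArg Sigma.fst (hΦ ⟨i, a⟩ ⟨j, b⟩)
    exact h
  have step1 : ∀ b : A j, (Φ ⟨j, b - M.φ j j b⟩).1 = (Φ ⟨j, b⟩).1 := by
    intro b
    have h := key j 0 b
    rw [M.m2, map_zero, add_zero, zero_add] at h
    exact h
  have step2 : ∀ (i : I) (a : A i) (b : A j),
      (Φ ⟨j, M.c i j + M.φ i j a + b⟩).1 = (Φ ⟨j, b⟩).1 := by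
    intro i a b
    obtain ⟨b', hb'⟩ := (M.m1 j).2 b
    have hb2 : b' - M.φ j j b' = b := hb'
    rw [← hb2]
    exact (key i a b').trans (step1 b').symm
  let H : AddSubgroup (A j) :=
    { carrier := {t : A j | ∀ b : A j, (Φ ⟨j, t + b⟩).1 = (Φ ⟨j, b⟩).1}
      zero_mem' := by
        intro b
        rw [zero_add]
      add_mem' := by
        intro s t hs ht b
        rw [add_assoc, hs (t + b), ht b]
      neg_mem' := by
        intro t ht b
        have h := ht (-t + b)
        rw [add_neg_cancel_left] at h
        exact h.symm }
  have hsub : (⋃ i : I, Set.range fun a : A i => M.c i j + M.φ i j a) ⊆ (H : Set (A j)) := by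
    rintro t ht
    simp only [Set.mem_iUnion, Set.mem_range] at ht
    obtain ⟨i, a, rfl⟩ := ht
    exact fun b => step2 i a b
  have hmem : b ∈ AddSubgroup.closure
      (⋃ i : I, Set.range fun a : A i => M.c i j + M.φ i j a) := by
    rw [hind j]; exact AddSubgroup.mem_top b
  have hb : ∀ b' : A j, (Φ ⟨j, b + b'⟩).1 = (Φ ⟨j, b'⟩).1 :=
    (AddSubgroup.closure_le H).mpr hsub hmem
  have := hb 0
  rwa [add_zero] at this

/-- Theorem 4.2 (Isomorphism theorem): the sums of two indecomposable affine meshes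
over the same index set are isomorphic (as binary algebras) if and only if the meshes
are homologous. -/
theorem mesh_sums_isomorphic_iff_homologous {I : Type*} [Nonempty I]
    {A A' : I → Type*} [∀ i, AddCommGroup (A i)] [∀ i, AddCommGroup (A' i)]
    (M : AffineMesh I A) (M' : AffineMesh I A')
    (hind : M.Indecomposable) (hind' : M'.Indecomposable) :
    (∃ φ : (Σ i, A i) ≃ (Σ i, A' i),
        ∀ x y : Σ i, A i, φ (M.sum x y) = M'.sum (φ x) (φ y)) ↔
      Homologous M M' := by
  constructor
  · rintro ⟨Φ, hΦ⟩
    have hΦ' : ∀ x y, Φ.symm (M'.sum x y) = M.sum (Φ.symm x) (Φ.symm y) := by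
      intro x y
      apply Φ.injective
      rw [Φ.apply_symm_apply, hΦ, Φ.apply_symm_apply, Φ.apply_symm_apply]
    have hfc : ∀ (j : I) (b : A j), (Φ ⟨j, b⟩).1 = (Φ ⟨j, 0⟩).1 :=
      fiber_const M M' hind Φ hΦ
    have hfc' : ∀ (k : I) (y : A' k), (Φ.symm ⟨k, y⟩).1 = (Φ.symm ⟨k, 0⟩).1 :=
      fiber_const M' M hind' Φ.symm hΦ'
    have hli : ∀ j : I, (Φ.symm ⟨(Φ ⟨j, (0 : A j)⟩).1, 0⟩).1 = j := by
      intro j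
      have h2 := hfc' ((Φ ⟨j, (0 : A j)⟩).1) ((Φ ⟨j, (0 : A j)⟩).2)
      rw [Sigma.eta, Φ.symm_apply_apply] at h2
      exact h2.symm
    have hri : ∀ k : I, (Φ ⟨(Φ.symm ⟨k, (0 : A' k)⟩).1, 0⟩).1 = k := by
      intro k
      have h2 := hfc ((Φ.symm ⟨k, (0 : A' k)⟩).1) ((Φ.symm ⟨k, (0 : A' k)⟩).2)
      rw [Sigma.eta, Φ.apply_symm_apply] at h2
      exact h2.symm
    have hexists : ∀ (j : I) (b : A j),
        ∃ y : A' ((Φ ⟨j, (0 : A j)⟩).1), Φ ⟨j, b⟩ = ⟨(Φ ⟨j, (0 : A j)⟩).1, y⟩ := by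
      intro j b
      exact sigma_eq_snd (Φ ⟨j, b⟩) _ (hfc j b)
    choose θ hθ using hexists
    -- the master equation (★)
    have star : ∀ (i j : I) (a : A i) (b : A j),
        θ j (M.c i j + M.φ i j a + (b - M.φ j j b)) =
          M'.c (Φ ⟨i, (0 : A i)⟩).1 (Φ ⟨j, (0 : A j)⟩).1
            + M'.φ (Φ ⟨i, (0 : A i)⟩).1 (Φ ⟨j, (0 : A j)⟩).1 (θ i a)
            + (θ j b - M'.φ (Φ ⟨j, (0 : A j)⟩).1 (Φ ⟨j, (0 : A j)⟩).1 (θ j b)) := by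
      intro i j a b
      have h := hΦ ⟨i, a⟩ ⟨j, b⟩
      rw [show M.sum ⟨i, a⟩ ⟨j, b⟩ = ⟨j, M.c i j + M.φ i j a + (b - M.φ j j b)⟩ from rfl,
        hθ j _, hθ i a, hθ j b] at h
      injection h
    have hθinj : ∀ j : I, Function.Injective (θ j) := by
      intro j b b' h
      have h2 : Φ ⟨j, b⟩ = Φ ⟨j, b'⟩ := by rw [hθ j b, hθ j b', h]
      have h3 := Φ.injective h2
      injection h3
    have hθsurj : ∀ j : I, Function.Surjective (θ j) := by
      intro j y
      have hx1 : (Φ.symm ⟨(Φ ⟨j, (0 : A j)⟩).1, y⟩).1 = j := by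
        rw [hfc' _ y]
        exact hli j
      obtain ⟨b, hb⟩ := sigma_eq_snd (Φ.symm ⟨(Φ ⟨j, (0 : A j)⟩).1, y⟩) j hx1
      refine ⟨b, ?_⟩
      have h2 : Φ ⟨j, b⟩ = ⟨(Φ ⟨j, (0 : A j)⟩).1, y⟩ := by
        rw [← hb, Φ.apply_symm_apply]
      rw [hθ j b] at h2
      injection h2
    -- additivity of `b ↦ θ j b - θ j 0`
    have hadd : ∀ (j : I) (x y : A j),
        θ j (x + y) - θ j 0 = (θ j x - θ j 0) + (θ j y - θ j 0) := by
      intro j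
      have h5 : ∀ (i : I) (a : A i) (b : A j),
          θ j (M.c i j + M.φ i j a + b) - θ j 0
            = (θ j (M.c i j + M.φ i j a) - θ j 0) + (θ j b - θ j 0) := by
        intro i a b
        obtain ⟨b', hb'⟩ := (M.m1 j).2 b
        have hb2 : b' - M.φ j j b' = b := hb'
        rw [← hb2]
        have hs1 := star i j a b'
        have hs2 := star i j a 0
        rw [map_zero, sub_zero, add_zero] at hs2
        have hs3 := star j j 0 b'
        rw [M.m2, map_zero, add_zero, zero_add, M'.m2, zero_add] at hs3
        linear_combination (norm := abel1) hs1 - hs2 - hs3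
      let H : AddSubgroup (A j) :=
        { carrier := {t : A j | ∀ b : A j,
            θ j (t + b) - θ j 0 = (θ j t - θ j 0) + (θ j b - θ j 0)}
          zero_mem' := by
            intro b
            rw [zero_add]
            abel
          add_mem' := by
            intro s t hs ht b
            have h1 := hs (t + b)
            rw [← add_assoc] at h1
            have h2 := ht b
            have h3 := hs t
            linear_combination (norm := abel1) h1 + h2 - h3
          neg_mem' := by
            intro t ht b
            have h1 := ht (-t + b)
            rw [add_neg_cancel_left] at h1
            have h2 := ht (-t)
            rw [add_neg_cancel] at h2
            linear_combination (norm := abel1) h2 - h1 }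
      have hsub : (⋃ i : I, Set.range fun a : A i => M.c i j + M.φ i j a)
          ⊆ (H : Set (A j)) := by
        rintro t ht
        simp only [Set.mem_iUnion, Set.mem_range] at ht
        obtain ⟨i, a, rfl⟩ := ht
        exact fun b => h5 i a b
      intro x y
      have hmem : x ∈ AddSubgroup.closure
          (⋃ i : I, Set.range fun a : A i => M.c i j + M.φ i j a) := by
        rw [hind j]; exact AddSubgroup.mem_top x
      have hx : ∀ b : A j, θ j (x + b) - θ j 0 = (θ j x - θ j 0) + (θ j b - θ j 0) :=
        (AddSubgroup.closure_le H).mpr hsub hmem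
      exact hx y
    have hbij : ∀ j : I, Function.Bijective fun b : A j => θ j b - θ j 0 := by
      intro j
      constructor
      · intro b b' h
        exact hθinj j (sub_left_inj.mp h)
      · intro y
        obtain ⟨b, hb⟩ := hθsurj j (y + θ j 0)
        refine ⟨b, ?_⟩
        show θ j b - θ j 0 = y
        rw [hb, add_sub_cancel_right]
    have hH1 : ∀ (i j : I) (a : A i),
        θ j (M.φ i j a) - θ j 0
          = M'.φ (Φ ⟨i, (0 : A i)⟩).1 (Φ ⟨j, (0 : A j)⟩).1 (θ i a)
            - M'.φ (Φ ⟨i, (0 : A i)⟩).1 (Φ ⟨j, (0 : A j)⟩).1 (θ i 0) := by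
      intro i j a
      have hs2 := star i j a 0
      rw [map_zero, sub_zero, add_zero] at hs2
      have hs0 := star i j 0 0
      rw [map_zero, add_zero, map_zero, sub_zero, add_zero] at hs0
      have h4 := hadd j (M.c i j) (M.φ i j a)
      linear_combination (norm := abel1) hs2 - hs0 - h4
    have hH2 : ∀ i j : I,
        θ j (M.c i j) - θ j 0
          = M'.c (Φ ⟨i, (0 : A i)⟩).1 (Φ ⟨j, (0 : A j)⟩).1
            + M'.φ (Φ ⟨i, (0 : A i)⟩).1 (Φ ⟨j, (0 : A j)⟩).1 (θ i 0)
            - M'.φ (Φ ⟨j, (0 : A j)⟩).1 (Φ ⟨j, (0 : A j)⟩).1 (θ j 0) := by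
      intro i j
      have hs0 := star i j 0 0
      rw [map_zero, add_zero, map_zero, sub_zero, add_zero] at hs0
      linear_combination (norm := abel1) hs0
    refine ⟨⟨fun j => (Φ ⟨j, (0 : A j)⟩).1, fun k => (Φ.symm ⟨k, (0 : A' k)⟩).1, hli, hri⟩,
      fun j => AddEquiv.mk' (Equiv.ofBijective _ (hbij j)) (fun x y => hadd j x y),
      fun j => θ j 0, ?_, ?_⟩
    · intro i j x
      show θ j (M.φ i j x) - θ j 0
        = M'.φ (Φ ⟨i, (0 : A i)⟩).1 (Φ ⟨j, (0 : A j)⟩).1 (θ i x - θ i 0)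
      rw [map_sub]
      exact hH1 i j x
    · intro i j
      exact hH2 i j
  · rintro ⟨π, ψ, d, h1, h2⟩
    refine ⟨Equiv.sigmaCongr π (fun i => (ψ i).toEquiv.trans (Equiv.addRight (d i))), ?_⟩
    rintro ⟨i, a⟩ ⟨j, b⟩
    show (⟨π j, ψ j (M.c i j + M.φ i j a + (b - M.φ j j b)) + d j⟩ : Σ i, A' i)
      = (⟨π j, M'.c (π i) (π j) + M'.φ (π i) (π j) (ψ i a + d i)
          + ((ψ j b + d j) - M'.φ (π j) (π j) (ψ j b + d j))⟩ : Σ i, A' i)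
    refine congrArg (fun z => (⟨π j, z⟩ : Σ i, A' i)) ?_
    simp only [map_add, map_sub]
    rw [h1 i j a, h1 j j b, h2 i j]
    abel
end

section
/- Let A, B be abelian groups with automorphisms f of A and g of B such that 1−f is surjective on A and 1−g is surjective on B (i.e., the affine quandles are connected). Then the affine quandles Aff(A,f) and Aff(B,g) are isomorphic as binary algebras if and only if there exists a group isomorphism ψ : A → B such that g = ψ ∘ f ∘ ψ⁻¹. -/
/-- Corollary 4.3: two connected affine quandles `Aff(A,f)` and `Aff(B,g)` are
isomorphic if and only if there is a group isomorphism `ψ : A → B` with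
`g = ψ ∘ f ∘ ψ⁻¹`. -/
theorem connected_affine_iso_iff_conjugate {A B : Type*} [AddCommGroup A]
    [AddCommGroup B] (f : A ≃+ A) (g : B ≃+ B)
    (hfc : Function.Surjective fun x : A => x - f x)
    (hgc : Function.Surjective fun x : B => x - g x) :
    (∃ φ : A ≃ B, ∀ x y : A, φ ((x - f x) + f y) = (φ x - g (φ x)) + g (φ y)) ↔
      ∃ ψ : A ≃+ B, ∀ x : A, g (ψ x) = ψ (f x) := by
  constructor
  · rintro ⟨φ, hφ⟩
    have hf0 : f (0 : A) = 0 := map_zero f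
    set e := φ 0 with he
    have key : ∀ u v : A, φ (u + v) = φ u + φ v - e := by
      intro u v
      obtain ⟨x, hx⟩ := hfc u
      simp only at hx
      have h1 := hφ x (f.symm v)
      have h2 := hφ x 0
      have h3 := hφ 0 (f.symm v)
      rw [f.apply_symm_apply, hx] at h1
      rw [hf0, add_zero, hx] at h2
      rw [hf0, sub_zero, f.apply_symm_apply, zero_add, ← he] at h3
      rw [h1, h2, h3, ← he]
      abel
    have hfφ : ∀ x : A, φ (f x) = e - g e + g (φ x) := by
      intro x
      have h := hφ 0 x
      rw [hf0, sub_zero, zero_add, ← he] at h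
      exact h
    refine ⟨{ toEquiv := φ.trans (Equiv.subRight e), map_add' := ?_ }, ?_⟩
    · intro u v
      show φ (u + v) - e = (φ u - e) + (φ v - e)
      rw [key]
      abel
    · intro x
      show g (φ x - e) = φ (f x) - e
      rw [hfφ, map_sub]
      abel
  · rintro ⟨ψ, hψ⟩
    refine ⟨ψ.toEquiv, fun x y => ?_⟩
    show ψ ((x - f x) + f y) = (ψ x - g (ψ x)) + g (ψ y)
    rw [map_add, map_sub, hψ, hψ]
end

section
/- Let Q be a medial quandle in which every orbit, as a subquandle, is latin. Then Q is isomorphic to a direct product L × P, where L is a latin medial quandle and P is a projection quandle. -/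
universe u

section Aux

variable {Q : Type u} (op : Q → Q → Q)

lemma orbit_refl (a : Q) : a ∈ qOrbit op a := ⟨1, one_mem _, rfl⟩

lemma orbit_closed {f : Equiv.Perm Q} (hf : f ∈ LMlt op) {x e : Q}
    (hx : x ∈ qOrbit op e) : f x ∈ qOrbit op e := by
  obtain ⟨g, hg, hge⟩ := hx
  exact ⟨f * g, mul_mem hf hg, by simp [Equiv.Perm.mul_apply, hge]⟩

lemma orbit_symm {x y : Q} (h : x ∈ qOrbit op y) : y ∈ qOrbit op x := by
  obtain ⟨f, hf, hfy⟩ := h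
  exact ⟨f⁻¹, inv_mem hf, by rw [← hfy]; simp⟩

lemma orbit_trans {x y z : Q} (h1 : x ∈ qOrbit op y) (h2 : y ∈ qOrbit op z) :
    x ∈ qOrbit op z := by
  obtain ⟨f, hf, hfy⟩ := h1
  obtain ⟨g, hg, hgz⟩ := h2
  exact ⟨f * g, mul_mem hf hg, by simp [Equiv.Perm.mul_apply, hgz, hfy]⟩

/-- The left translation by `a` as a permutation. -/
noncomputable def Lperm (hQ : IsQuandle op) (a : Q) : Equiv.Perm Q :=
  Equiv.ofBijective (op a)
    ⟨fun u v h => by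
      obtain ⟨w, _, hu⟩ := hQ.2.2 a (op a v)
      exact (hu u h).trans (hu v rfl).symm,
     fun y => (hQ.2.2 a y).exists⟩

lemma Lperm_mem (hQ : IsQuandle op) (a : Q) : Lperm op hQ a ∈ LMlt op :=
  Subgroup.subset_closure ⟨a, fun _ => rfl⟩

lemma op_mem_orbit (hQ : IsQuandle op) (a b : Q) : op a b ∈ qOrbit op b :=
  ⟨Lperm op hQ a, Lperm_mem op hQ a, rfl⟩

variable (hQ : IsQuandle op) (hM : IsMedial op)
    (hlatin : ∀ e : Q, ∀ a ∈ qOrbit op e,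
      Set.BijOn (fun x => op x a) (qOrbit op e) (qOrbit op e))

include hQ hM hlatin

/-- Key lemma: if `x·e = y·e` then `x·z = y·z` for all `z`. -/
lemma keyA {e x y : Q} (h : op x e = op y e) (z : Q) : op x z = op y z := by
  have h1 : op (op x z) (op e z) = op (op y z) (op e z) := by
    calc op (op x z) (op e z) = op (op x e) (op z z) := (hM x e z z).symm
      _ = op (op x e) z := by rw [hQ.1]
      _ = op (op y e) z := by rw [h]
      _ = op (op y e) (op z z) := by rw [hQ.1]
      _ = op (op y z) (op e z) := hM y e z z
  exact (hlatin z (op e z) (op_mem_orbit op hQ e z)).injOn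
    (op_mem_orbit op hQ x z) (op_mem_orbit op hQ y z) h1

/-- Injectivity: same orbit and same image under `R_e` implies equal. -/
lemma key_inj {e x y : Q} (h : op x e = op y e) (ho : x ∈ qOrbit op y) : x = y := by
  have h2 : op x y = op y y := keyA op hQ hM hlatin h y
  exact (hlatin y y (orbit_refl op y)).injOn ho (orbit_refl op y) h2

/-- Surjectivity: `R_e` maps each orbit onto the orbit of `e`. -/
lemma key_surj {e a : Q} (z : Q) (ha : a ∈ qOrbit op e) :
    ∃ x ∈ qOrbit op z, op x e = a := by
  obtain ⟨c, hc, hc2⟩ := (hlatin e (op z e) (op_mem_orbit op hQ z e)).surjOn ha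
  obtain ⟨b, hb, hb2⟩ := (hlatin e e (orbit_refl op e)).surjOn hc
  refine ⟨op b z, op_mem_orbit op hQ b z, ?_⟩
  calc op (op b z) e = op (op b z) (op e e) := by rw [hQ.1]
    _ = op (op b e) (op z e) := hM b z e e
    _ = op c (op z e) := by rw [show op b e = c from hb2]
    _ = a := hc2

end Aux

/-- Theorem 5.5: a medial quandle in which all orbits are latin is isomorphic to a
direct product of a latin (medial) quandle and a projection quandle. -/
theorem latin_orbits_direct_product {Q : Type u} [Nonempty Q] (op : Q → Q → Q)
    (hQ : IsQuandle op) (hM : IsMedial op)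
    (hlatin : ∀ e : Q, ∀ a ∈ qOrbit op e,
      Set.BijOn (fun x => op x a) (qOrbit op e) (qOrbit op e)) :
    ∃ (L : Type u) (P : Type u) (opL : L → L → L) (_ : Nonempty P),
      IsQuandle opL ∧ IsMedial opL ∧
      (∀ a : L, Function.Bijective fun x : L => opL x a) ∧
      ∃ φ : Q ≃ L × P,
        ∀ x y : Q, φ (op x y) = (opL (φ x).1 (φ y).1, (φ y).2) := by
  classical
  obtain ⟨e⟩ := ‹Nonempty Q›
  let s : Setoid Q := ⟨fun x y => x ∈ qOrbit op y,
    ⟨orbit_refl op, fun h => orbit_symm op h, fun h1 h2 => orbit_trans op h1 h2⟩⟩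
  refine ⟨↥(qOrbit op e), Quotient s, fun a b => ⟨op a.1 b.1, ?_⟩, ⟨Quotient.mk s e⟩,
    ⟨?_, ?_, ?_⟩, ?_, ?_, ?_⟩
  · -- closure of the orbit under op
    exact orbit_trans op (op_mem_orbit op hQ a.1 b.1) b.2
  · -- idempotent
    exact fun x => Subtype.ext (hQ.1 x.1)
  · -- left distributive
    exact fun x y z => Subtype.ext (hQ.2.1 x.1 y.1 z.1)
  · -- left quasigroup
    intro x y
    obtain ⟨u, hu, huniq⟩ := hQ.2.2 x.1 y.1
    have hmem : u ∈ qOrbit op e := by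
      have h1 : (Lperm op hQ x.1).symm y.1 = u :=
        (Equiv.symm_apply_eq _).mpr hu.symm
      have h2 : ((Lperm op hQ x.1)⁻¹ : Equiv.Perm Q) y.1 = u := h1
      rw [← h2]
      exact orbit_closed op (inv_mem (Lperm_mem op hQ x.1)) y.2
    refine ⟨⟨u, hmem⟩, Subtype.ext hu, fun v hv => Subtype.ext (huniq v.1 ?_)⟩
    exact congrArg Subtype.val hv
  · -- medial
    exact fun x y u v => Subtype.ext (hM x.1 y.1 u.1 v.1)
  · -- latin
    intro a
    constructor
    · intro u v h
      exact Subtype.ext ((hlatin e a.1 a.2).injOn u.2 v.2 (congrArg Subtype.val h))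
    · intro y
      obtain ⟨x, hx, hxe⟩ := (hlatin e a.1 a.2).surjOn y.2
      exact ⟨⟨x, hx⟩, Subtype.ext hxe⟩
  · -- the equivalence and homomorphism property
    have hbij : Function.Bijective
        (fun x : Q => ((⟨op x e, op_mem_orbit op hQ x e⟩ : ↥(qOrbit op e)),
          Quotient.mk s x)) := by
      constructor
      · intro x y h
        have h1 : op x e = op y e := congrArg (fun p => (Prod.fst p).1) h
        have h2 : Quotient.mk s x = Quotient.mk s y := congrArg Prod.snd h
        exact key_inj op hQ hM hlatin h1 (Quotient.exact h2)
      · rintro ⟨a, p⟩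
        obtain ⟨z, rfl⟩ := Quotient.exists_rep p
        obtain ⟨x, hx, hxe⟩ := key_surj op hQ hM hlatin (e := e) z a.2
        refine ⟨x, Prod.ext (Subtype.ext hxe) (Quotient.sound hx)⟩
    refine ⟨Equiv.ofBijective _ hbij, fun x y => ?_⟩
    show ((⟨op (op x y) e, _⟩ : ↥(qOrbit op e)), Quotient.mk s (op x y)) = _
    refine Prod.ext (Subtype.ext ?_) (Quotient.sound (op_mem_orbit op hQ x y))
    show op (op x y) e = op (op x e) (op y e)
    rw [← hM x y e e, hQ.1 e]
end

section
/- Let ((A_i)_{i∈I}; φ_{i,j}; c_{i,j}) be an indecomposable affine mesh over a set I and let m ≥ 1. Then the sum of the mesh is m-reductive if and only if φ_{i,i}^{m−1} = 0 for every i ∈ I. -/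
section Aux

variable {B : Type*} [AddCommGroup B]

lemma iter_hom_add (φ : B →+ B) (k : ℕ) (x y : B) :
    (fun a => φ a)^[k] (x + y) = (fun a => φ a)^[k] x + (fun a => φ a)^[k] y := by
  induction k generalizing x y with
  | zero => rfl
  | succ k ih => simp [Function.iterate_succ_apply, map_add, ih]

lemma iter_hom_zero (φ : B →+ B) (k : ℕ) :
    (fun a => φ a)^[k] (0 : B) = 0 := by
  induction k with
  | zero => rfl
  | succ k ih => simp [Function.iterate_succ_apply, ih]

lemma iter_hom_neg (φ : B →+ B) (k : ℕ) (x : B) :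
    (fun a => φ a)^[k] (-x) = -(fun a => φ a)^[k] x := by
  induction k generalizing x with
  | zero => rfl
  | succ k ih => simp [Function.iterate_succ_apply, ih]

lemma iter_hom_sub (φ : B →+ B) (k : ℕ) (x y : B) :
    (fun a => φ a)^[k] (x - y) = (fun a => φ a)^[k] x - (fun a => φ a)^[k] y := by
  simp [sub_eq_add_neg, iter_hom_add, iter_hom_neg]

lemma iter_aux (φ : B →+ B) (w : B) (k : ℕ) (a : B) :
    (fun a => φ a + (w - φ w))^[k] a
      = (fun a => φ a)^[k] a + (w - (fun a => φ a)^[k] w) := by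
  induction k generalizing a with
  | zero => simp
  | succ k ih =>
      rw [Function.iterate_succ_apply, ih, Function.iterate_succ_apply,
        Function.iterate_succ_apply]
      rw [iter_hom_add, iter_hom_sub]
      abel

end Aux

section MeshAux

variable {I : Type*} {A : I → Type*} [∀ i, AddCommGroup (A i)]

lemma sum_iterG (M : AffineMesh I A) (j : I) (w : A j) (k : ℕ) (a : A j) :
    (fun z => M.sum z ⟨j, w⟩)^[k] ⟨j, a⟩
      = ⟨j, (fun a => M.φ j j a + (w - M.φ j j w))^[k] a⟩ := by
  induction k generalizing a with
  | zero => rfl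
  | succ k ih =>
      rw [Function.iterate_succ_apply, Function.iterate_succ_apply]
      have h1 : M.sum ⟨j, a⟩ ⟨j, w⟩ = ⟨j, M.φ j j a + (w - M.φ j j w)⟩ := by
        simp [AffineMesh.sum, M.m2]
      rw [h1, ih]

end MeshAux

/-- Proposition 6.2: the sum of an indecomposable affine mesh is `m`-reductive if and
only if `φ i i ^ (m-1) = 0` for every `i`. -/
theorem mesh_sum_mreductive_iff {I : Type*} [Nonempty I] {A : I → Type*}
    [∀ i, AddCommGroup (A i)] (M : AffineMesh I A) (hind : M.Indecomposable)
    (m : ℕ) (hm : 1 ≤ m) :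
    (∀ x y : Σ i, A i, (fun z => M.sum z y)^[m] x = y) ↔
      ∀ i : I, ∀ x : A i, (fun a : A i => M.φ i i a)^[m - 1] x = 0 := by
  obtain ⟨n, rfl⟩ : ∃ n, m = n + 1 := ⟨m - 1, (Nat.succ_pred_eq_of_pos hm).symm⟩
  simp only [Nat.add_sub_cancel]
  constructor
  · intro h i x
    have key : ∀ (i' : I) (a : A i'),
        (fun b => M.φ i i b)^[n] (M.c i' i + M.φ i' i a) = 0 := by
      intro i' a
      have h0 := h ⟨i', a⟩ ⟨i, 0⟩
      rw [Function.iterate_succ_apply] at h0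
      have e1 : M.sum ⟨i', a⟩ ⟨i, 0⟩ = ⟨i, M.c i' i + M.φ i' i a⟩ := by
        simp [AffineMesh.sum]
      rw [e1, sum_iterG, iter_aux, iter_hom_zero] at h0
      simpa using h0
    let K : AddSubgroup (A i) :=
      { carrier := {y | (fun b => M.φ i i b)^[n] y = 0}
        add_mem' := by
          intro a b ha hb
          simp only [Set.mem_setOf_eq] at *
          rw [iter_hom_add, ha, hb, add_zero]
        zero_mem' := iter_hom_zero _ _
        neg_mem' := by
          intro a ha
          simp only [Set.mem_setOf_eq] at *
          rw [iter_hom_neg, ha, neg_zero] }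
    have hsub : (⋃ i' : I, Set.range fun a : A i' => M.c i' i + M.φ i' i a) ⊆ ↑K := by
      rintro y hy
      simp only [Set.mem_iUnion, Set.mem_range] at hy
      obtain ⟨i', a, rfl⟩ := hy
      exact key i' a
    have hle : AddSubgroup.closure
        (⋃ i' : I, Set.range fun a : A i' => M.c i' i + M.φ i' i a) ≤ K :=
      (AddSubgroup.closure_le K).mpr hsub
    rw [hind i] at hle
    exact hle (AddSubgroup.mem_top x)
  · intro h x y
    obtain ⟨j, w⟩ := y
    obtain ⟨i, a⟩ := x
    rw [Function.iterate_succ_apply]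
    have e1 : M.sum ⟨i, a⟩ ⟨j, w⟩ = ⟨j, M.c i j + M.φ i j a + (w - M.φ j j w)⟩ := rfl
    rw [e1, sum_iterG, iter_aux, h j, h j]
    simp
end
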